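/- (Theorem 1.) For every ε > 0 and δ > 0 there exists a positive constant A_{ε,δ,β} such that for every T ≥ 1 and every f ∈ Δ with f(d̄) ≥ ε and δ_{f,β} ≥ δ, the regret of the newsvendor-based policy satisfies R^T_f(y) ≤ A_{ε,δ,β}. -/

import Mathlib

open Finset

noncomputable section

/-- `f` is a demand distribution on `{0, 1, ..., dbar}`. -/
def IsDist (dbar : ℕ) (f : ℕ → ℝ) : Prop :=
  (∀ d, 0 ≤ f d) ∧ (∀ d, dbar < d → f d = 0) ∧ ∑ d ∈ Finset.range (dbar + 1), f d = 1

/-- The cdf `F_f(d) = Σ_{d'=0}^{d} f(d')`. -/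
def cdf (f : ℕ → ℝ) (d : ℕ) : ℝ := ∑ i ∈ Finset.range (d + 1), f i

/-- `F_f(d-1)`, with the convention `F_f(-1) = 0`. -/
def cdfm1 (f : ℕ → ℝ) (d : ℕ) : ℝ := ∑ i ∈ Finset.range d, f i

/-- The one-period expected cost under order-up-to level `y`. -/
def Q (h b : ℝ) (dbar : ℕ) (f : ℕ → ℝ) (y : ℕ) : ℝ :=
  ∑ d ∈ Finset.range (dbar + 1),
    f d * (h * max ((y : ℝ) - (d : ℝ)) 0 + b * max ((d : ℝ) - (y : ℝ)) 0)

/-- The minimum one-period expected cost. -/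
def Qstar (h b : ℝ) (dbar : ℕ) (f : ℕ → ℝ) : ℝ :=
  (Finset.range (dbar + 1)).inf' Finset.nonempty_range_add_one (Q h b dbar f)

/-- The newsvendor quantile `y*_{f,β} = min {d ∈ {0,...,dbar} | F_f(d) ≥ β}`. -/
def ystar (dbar : ℕ) (β : ℝ) (f : ℕ → ℝ) : ℕ :=
  sInf {d : ℕ | d ≤ dbar ∧ β ≤ cdf f d}

/-- The empirical distribution of `n` observations. -/
def emp (n : ℕ) (d : Fin n → ℕ) (k : ℕ) : ℝ :=
  (∑ s : Fin n, if d s = k then (1 : ℝ) else 0) / n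

/-- The empirical newsvendor quantile `ŷ_{n+1}` computed from `n` observations. -/
def yhat (dbar : ℕ) (β : ℝ) (n : ℕ) (d : Fin n → ℕ) : ℕ := ystar dbar β (emp n d)

/-- The order-up-to level of period `n+1` of the newsvendor-based policy, given the demands
of periods `1,...,n`:  `y_1 = ŷ_1 = 0` and `y_t = max (ŷ_t) (y_{t-1} - d_{t-1})`. -/
def pol (dbar : ℕ) (β : ℝ) : (n : ℕ) → (Fin n → ℕ) → ℕ
  | 0, _ => 0
  | n + 1, d =>
      max (yhat dbar β (n + 1) d) (pol dbar β n (fun s => d s.castSucc) - d (Fin.last n))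

/-- The expectation `E_f[g(D_1,...,D_n)]` under i.i.d. draws from `f`. -/
def expec (dbar n : ℕ) (f : ℕ → ℝ) (g : (Fin n → ℕ) → ℝ) : ℝ :=
  ∑ d : Fin n → Fin (dbar + 1), (∏ s : Fin n, f (d s)) * g (fun s => (d s : ℕ))

open scoped Classical in
/-- The probability `P_f[(D_1,...,D_n) ∈ E]` under i.i.d. draws from `f`. -/
def prob (dbar n : ℕ) (f : ℕ → ℝ) (E : (Fin n → ℕ) → Prop) : ℝ :=
  ∑ d : Fin n → Fin (dbar + 1), if E (fun s => (d s : ℕ)) then ∏ s : Fin n, f (d s) else 0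

/-- `R^{T1}_f(y) = Σ_{t=1}^{T} E_f[Q_f(ŷ_t)] − T·Q*_f`. -/
def regretT1 (h b : ℝ) (dbar : ℕ) (β : ℝ) (f : ℕ → ℝ) (T : ℕ) : ℝ :=
  ∑ t ∈ Finset.range T, expec dbar t f (fun d => Q h b dbar f (yhat dbar β t d))
    - (T : ℝ) * Qstar h b dbar f

/-- `R^{T2}_f(y) = Σ_{t=3}^{T} E_f[Q_f(y_t) − Q_f(ŷ_t)]` (the index `n = t - 1` below). -/
def regretT2 (h b : ℝ) (dbar : ℕ) (β : ℝ) (f : ℕ → ℝ) (T : ℕ) : ℝ :=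
  ∑ n ∈ Finset.Ico 2 T,
    expec dbar n f (fun d => Q h b dbar f (pol dbar β n d) - Q h b dbar f (yhat dbar β n d))

/-- The `T`-period regret `R^{T}_f(y) = Σ_{t=1}^{T} E_f[Q_f(y_t(D_1,...,D_{t-1}))] − T·Q*_f`. -/
def regret (h b : ℝ) (dbar : ℕ) (β : ℝ) (f : ℕ → ℝ) (T : ℕ) : ℝ :=
  ∑ t ∈ Finset.range T, expec dbar t f (fun d => Q h b dbar f (pol dbar β t d))
    - (T : ℝ) * Qstar h b dbar f

/-- The binary Kullback–Leibler divergence between Bernoulli distributions `u` and `v`. -/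
def klB (u v : ℝ) : ℝ := u * Real.log (u / v) + (1 - u) * Real.log ((1 - u) / (1 - v))

/-- The total variation distance `δ_V(f,g)`. -/
def tvDist (dbar : ℕ) (f g : ℕ → ℝ) : ℝ := (∑ d ∈ Finset.range (dbar + 1), |f d - g d|) / 2


/-- `α_(f,β) = max ({0} ∪ {F_f(d) | d ∈ {0,...,dbar}, F_f(d) < β})`. -/
def alphaSep (dbar : ℕ) (β : ℝ) (f : ℕ → ℝ) : ℝ :=
  sSup (insert 0 {x : ℝ | ∃ d ≤ dbar, cdf f d = x ∧ x < β})

/-- `γ_(f,β) = min {F_f(d) | d ∈ {0,...,dbar}, F_f(d) > β}`. -/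
def gammaSep (dbar : ℕ) (β : ℝ) (f : ℕ → ℝ) : ℝ :=
  sInf {x : ℝ | ∃ d ≤ dbar, cdf f d = x ∧ β < x}

/-- The separation `δ_(f,β)` of `f` from `β`. -/
def sep (dbar : ℕ) (β : ℝ) (f : ℕ → ℝ) : ℝ :=
  min (β - alphaSep dbar β f) (gammaSep dbar β f - β)


open scoped Classical

section Aux

variable {dbar : ℕ} {f : ℕ → ℝ}

/-! ### cdf basics -/

lemma cdf_mono (hf : ∀ d, 0 ≤ f d) : Monotone (cdf f) := by
  intro i j hij
  exact Finset.sum_le_sum_of_subset_of_nonneg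
    (Finset.range_subset_range.2 (by omega)) (fun k _ _ => hf k)

lemma cdf_eq_one (hf : IsDist dbar f) {d : ℕ} (hd : dbar ≤ d) : cdf f d = 1 := by
  rw [cdf, ← hf.2.2]
  exact (Finset.sum_subset (Finset.range_subset_range.2 (by omega))
    (fun k _ hk => hf.2.1 k (by simp at hk ⊢; omega))).symm

lemma cdf_nonneg (hf : ∀ d, 0 ≤ f d) (d : ℕ) : 0 ≤ cdf f d :=
  Finset.sum_nonneg fun k _ => hf k

lemma cdf_le_one (hf : IsDist dbar f) (d : ℕ) : cdf f d ≤ 1 := by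
  rcases le_total d dbar with hd | hd
  · rw [← cdf_eq_one hf (le_refl dbar)]; exact cdf_mono hf.1 hd
  · rw [cdf_eq_one hf hd]

lemma sum_ite_le (hf : IsDist dbar f) (y : ℕ) :
    (∑ d ∈ Finset.range (dbar + 1), if d ≤ y then f d else 0) = cdf f y := by
  rcases le_or_gt y dbar with hy | hy
  · rw [cdf, ← Finset.sum_subset (Finset.range_subset_range.2 (by omega) :
      Finset.range (y+1) ⊆ Finset.range (dbar+1))
      (fun k _ hk => by simp at hk; rw [if_neg (by omega)])]
    exact Finset.sum_congr rfl fun k hk => by simp at hk; rw [if_pos (by omega)]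
  · rw [cdf_eq_one hf (by omega), ← hf.2.2]
    exact Finset.sum_congr rfl fun k hk => by simp at hk; rw [if_pos (by omega)]

end Aux

section Expec

variable {dbar : ℕ} {f : ℕ → ℝ}

/-- The snoc equivalence. -/
def snocEquiv (n m : ℕ) : ((Fin n → Fin m) × Fin m) ≃ (Fin (n+1) → Fin m) where
  toFun p := Fin.snoc p.1 p.2
  invFun d := (fun s => d s.castSucc, d (Fin.last n))
  left_inv p := by
    ext s
    · simp
    · simp
  right_inv d := by
    funext s
    refine Fin.lastCases ?_ ?_ s <;> simp

lemma expec_snoc (n : ℕ) (H : (Fin n → ℕ) → ℕ → ℝ) :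
    expec dbar (n+1) f (fun d => H (fun s => d s.castSucc) (d (Fin.last n)))
      = ∑ k ∈ Finset.range (dbar+1), f k * expec dbar n f (fun e => H e k) := by
  rw [expec, ← Equiv.sum_comp (snocEquiv n (dbar+1)), Fintype.sum_prod_type]
  rw [← Fin.sum_univ_eq_sum_range (fun k => f k * expec dbar n f (fun e => H e k))]
  rw [Finset.sum_comm]
  refine Finset.sum_congr rfl fun k _ => ?_
  rw [expec, Finset.mul_sum]
  refine Finset.sum_congr rfl fun e _ => ?_
  have h1 : ∀ s : Fin n, (snocEquiv n (dbar+1) (e, k)) s.castSucc = e s := by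
    intro s; simp [snocEquiv]
  have h2 : (snocEquiv n (dbar+1) (e, k)) (Fin.last n) = k := by simp [snocEquiv]
  have h3 : (∏ s : Fin (n+1), f ((snocEquiv n (dbar+1) (e, k)) s : ℕ))
      = (∏ s : Fin n, f (e s)) * f k := by
    rw [Fin.prod_univ_castSucc]
    simp only [h2]
    congr 1
    exact Finset.prod_congr rfl fun s _ => by rw [h1]
  have h4 : H (fun s => ((snocEquiv n (dbar+1) (e, k)) s.castSucc : ℕ)) ((snocEquiv n (dbar+1) (e, k)) (Fin.last n) : ℕ)
      = H (fun s => (e s : ℕ)) k := by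
    rw [h2]; congr 1; funext s; rw [h1]
  rw [h3, h4]; ring

lemma expec_zero (g : (Fin 0 → ℕ) → ℝ) : expec dbar 0 f g = g (fun s => s.elim0) := by
  rw [expec]
  rw [Finset.sum_eq_single (fun s => s.elim0)]
  · simp; congr; funext (s : Fin 0); exact s.elim0
  · intro d _ hd; exact absurd (funext fun s => s.elim0) hd
  · intro hmem; exact absurd (Finset.mem_univ _) hmem

lemma expec_const (hf : IsDist dbar f) (n : ℕ) (c : ℝ) : expec dbar n f (fun _ => c) = c := by
  induction n with
  | zero => rw [expec_zero]
  | succ n ih =>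
      have := expec_snoc (dbar := dbar) (f := f) n (fun _ _ => c)
      rw [this]
      simp only [ih, ← Finset.sum_mul, hf.2.2, one_mul]

lemma expec_add (n : ℕ) (g1 g2 : (Fin n → ℕ) → ℝ) :
    expec dbar n f (fun d => g1 d + g2 d) = expec dbar n f g1 + expec dbar n f g2 := by
  rw [expec, expec, expec, ← Finset.sum_add_distrib]
  exact Finset.sum_congr rfl fun d _ => by ring

lemma expec_mul_const (n : ℕ) (g : (Fin n → ℕ) → ℝ) (c : ℝ) :
    expec dbar n f (fun d => g d * c) = expec dbar n f g * c := by
  rw [expec, expec, Finset.sum_mul]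
  exact Finset.sum_congr rfl fun d _ => by ring

lemma expec_const_mul (n : ℕ) (g : (Fin n → ℕ) → ℝ) (c : ℝ) :
    expec dbar n f (fun d => c * g d) = c * expec dbar n f g := by
  rw [expec, expec, Finset.mul_sum]
  exact Finset.sum_congr rfl fun d _ => by ring

lemma expec_sum {ι : Type*} (n : ℕ) (s : Finset ι) (g : ι → (Fin n → ℕ) → ℝ) :
    expec dbar n f (fun d => ∑ i ∈ s, g i d) = ∑ i ∈ s, expec dbar n f (g i) := by
  simp only [expec, Finset.mul_sum]
  rw [Finset.sum_comm]

lemma expec_mono (hf : ∀ d, 0 ≤ f d) (n : ℕ) {g1 g2 : (Fin n → ℕ) → ℝ}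
    (hg : ∀ d : Fin n → ℕ, (∀ s, d s ≤ dbar) → g1 d ≤ g2 d) :
    expec dbar n f g1 ≤ expec dbar n f g2 := by
  refine Finset.sum_le_sum fun d _ => ?_
  refine mul_le_mul_of_nonneg_left (hg _ (fun s => Nat.lt_succ_iff.mp (d s).isLt)) ?_
  exact Finset.prod_nonneg fun s _ => hf _

lemma expec_nonneg (hf : ∀ d, 0 ≤ f d) (n : ℕ) {g : (Fin n → ℕ) → ℝ}
    (hg : ∀ d, 0 ≤ g d) : 0 ≤ expec dbar n f g :=
  Finset.sum_nonneg fun d _ => mul_nonneg (Finset.prod_nonneg fun s _ => hf _) (hg _)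

lemma expec_sub_const (hf : IsDist dbar f) (n : ℕ) (g : (Fin n → ℕ) → ℝ) (c : ℝ) :
    expec dbar n f (fun d => g d - c) = expec dbar n f g - c := by
  have : ∀ d : Fin n → ℕ, g d - c = g d + (-c) := fun d => by ring
  simp only [this, expec_add, expec_const hf]
  ring

end Expec

section Moments

variable {dbar : ℕ} {f : ℕ → ℝ}

/-- Centered sum `S_n = Σ g(d_s)`. -/
def Sf (g : ℕ → ℝ) (n : ℕ) (d : Fin n → ℕ) : ℝ := ∑ s : Fin n, g (d s)

lemma Sf_succ (g : ℕ → ℝ) (n : ℕ) :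
    Sf g (n+1) = fun d => Sf g n (fun s => d s.castSucc) + g (d (Fin.last n)) := by
  funext d; exact Fin.sum_univ_castSucc _

lemma expec_Sf (hf : IsDist dbar f) (g : ℕ → ℝ)
    (hm : ∑ k ∈ Finset.range (dbar+1), f k * g k = 0) (n : ℕ) :
    expec dbar n f (Sf g n) = 0 := by
  induction n with
  | zero => rw [expec_zero]; simp [Sf]
  | succ n ih =>
      rw [Sf_succ, expec_snoc n (fun e k => Sf g n e + g k)]
      have : ∀ k, expec dbar n f (fun e => Sf g n e + g k)
          = expec dbar n f (Sf g n) + g k := fun k => by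
        rw [expec_add, expec_const hf]
      simp only [this, ih, zero_add]
      exact hm

lemma expec_Sf2_nonneg (hf : ∀ d, 0 ≤ f d) (g : ℕ → ℝ) (n : ℕ) :
    0 ≤ expec dbar n f (fun d => Sf g n d ^ 2) :=
  expec_nonneg hf n fun d => sq_nonneg _

lemma expec_Sf2 (hf : IsDist dbar f) (g : ℕ → ℝ)
    (hm : ∑ k ∈ Finset.range (dbar+1), f k * g k = 0) (hb1 : ∀ k, |g k| ≤ 1) (n : ℕ) :
    expec dbar n f (fun d => Sf g n d ^ 2) ≤ n := by
  induction n with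
  | zero => rw [expec_zero]; simp [Sf]
  | succ n ih =>
      have hrw : (fun d : Fin (n+1) → ℕ => Sf g (n+1) d ^ 2)
          = fun d => (fun e k => (Sf g n e + g k)^2) (fun s => d s.castSucc) (d (Fin.last n)) := by
        rw [Sf_succ]
      rw [hrw, expec_snoc n (fun e k => (Sf g n e + g k)^2)]
      have hexp : ∀ k : ℕ, expec dbar n f (fun e => (Sf g n e + g k)^2)
          = expec dbar n f (fun d => Sf g n d ^ 2) + g k ^ 2 := by
        intro k
        have h1 : (fun e => (Sf g n e + g k)^2)
            = fun e => (Sf g n e ^ 2 + Sf g n e * (2 * g k)) + g k ^ 2 := by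
          funext e; ring
        rw [h1, expec_add, expec_add, expec_mul_const, expec_const hf,
          expec_Sf hf g hm]
        ring
      simp only [hexp]
      have hsplit : ∑ k ∈ Finset.range (dbar+1),
          f k * (expec dbar n f (fun d => Sf g n d ^ 2) + g k ^ 2)
          = expec dbar n f (fun d => Sf g n d ^ 2) * (∑ k ∈ Finset.range (dbar+1), f k)
            + ∑ k ∈ Finset.range (dbar+1), f k * g k ^ 2 := by
        rw [Finset.mul_sum, ← Finset.sum_add_distrib]
        exact Finset.sum_congr rfl fun k _ => by ring
      rw [hsplit, hf.2.2, mul_one]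
      have hm2 : ∑ k ∈ Finset.range (dbar+1), f k * g k ^ 2 ≤ 1 := by
        rw [← hf.2.2]
        refine Finset.sum_le_sum fun k _ => ?_
        have h2 := hb1 k
        have hg2 : g k ^ 2 ≤ 1 := by nlinarith [sq_abs (g k), abs_nonneg (g k)]
        nlinarith [mul_nonneg (hf.1 k) (sub_nonneg.2 hg2)]
      push_cast
      linarith [ih]

lemma expec_Sf4 (hf : IsDist dbar f) (g : ℕ → ℝ)
    (hm : ∑ k ∈ Finset.range (dbar+1), f k * g k = 0) (hb1 : ∀ k, |g k| ≤ 1) (n : ℕ) :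
    expec dbar n f (fun d => Sf g n d ^ 4) ≤ 3 * (n : ℝ) ^ 2 := by
  induction n with
  | zero => rw [expec_zero]; simp [Sf]
  | succ n ih =>
      have hrw : (fun d : Fin (n+1) → ℕ => Sf g (n+1) d ^ 4)
          = fun d => (fun e k => (Sf g n e + g k)^4) (fun s => d s.castSucc) (d (Fin.last n)) := by
        rw [Sf_succ]
      rw [hrw, expec_snoc n (fun e k => (Sf g n e + g k)^4)]
      set E4 := expec dbar n f (fun d => Sf g n d ^ 4) with hE4
      set E3 := expec dbar n f (fun d => Sf g n d ^ 3) with hE3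
      set E2 := expec dbar n f (fun d => Sf g n d ^ 2) with hE2
      have hexp : ∀ k : ℕ, expec dbar n f (fun e => (Sf g n e + g k)^4)
          = E4 + E3 * (4 * g k) + E2 * (6 * g k ^ 2) + g k ^ 4 := by
        intro k
        have h1 : (fun e => (Sf g n e + g k)^4)
            = fun e => (((Sf g n e ^ 4 + Sf g n e ^ 3 * (4 * g k))
                + (Sf g n e ^ 2 * (6 * g k ^ 2) + Sf g n e * (4 * g k ^ 3)))
                + g k ^ 4) := by
          funext e; ring
        rw [h1]
        simp only [expec_add, expec_mul_const]
        rw [expec_const hf, expec_Sf hf g hm]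
        ring
      simp only [hexp]
      have hsplit : ∑ k ∈ Finset.range (dbar+1),
          f k * (E4 + E3 * (4 * g k) + E2 * (6 * g k ^ 2) + g k ^ 4)
          = E4 * (∑ k ∈ Finset.range (dbar+1), f k)
            + 4 * E3 * (∑ k ∈ Finset.range (dbar+1), f k * g k)
            + 6 * E2 * (∑ k ∈ Finset.range (dbar+1), f k * g k ^ 2)
            + ∑ k ∈ Finset.range (dbar+1), f k * g k ^ 4 := by
        rw [Finset.mul_sum, Finset.mul_sum, Finset.mul_sum]
        rw [← Finset.sum_add_distrib, ← Finset.sum_add_distrib, ← Finset.sum_add_distrib]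
        exact Finset.sum_congr rfl fun k _ => by ring
      rw [hsplit, hf.2.2, hm, mul_one, mul_zero, add_zero]
      have hm2 : ∑ k ∈ Finset.range (dbar+1), f k * g k ^ 2 ≤ 1 := by
        rw [← hf.2.2]
        refine Finset.sum_le_sum fun k _ => ?_
        have h2 := hb1 k
        have hg2 : g k ^ 2 ≤ 1 := by nlinarith [sq_abs (g k), abs_nonneg (g k)]
        nlinarith [mul_nonneg (hf.1 k) (sub_nonneg.2 hg2)]
      have hm2' : 0 ≤ ∑ k ∈ Finset.range (dbar+1), f k * g k ^ 2 :=
        Finset.sum_nonneg fun k _ => mul_nonneg (hf.1 k) (sq_nonneg _)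
      have hm4 : ∑ k ∈ Finset.range (dbar+1), f k * g k ^ 4 ≤ 1 := by
        rw [← hf.2.2]
        refine Finset.sum_le_sum fun k _ => ?_
        have h2 := hb1 k
        have hg2 : g k ^ 2 ≤ 1 := by nlinarith [sq_abs (g k), abs_nonneg (g k)]
        have hg4 : g k ^ 4 ≤ 1 := by nlinarith [sq_nonneg (g k), hg2]
        nlinarith [mul_nonneg (hf.1 k) (sub_nonneg.2 hg4)]
      have hE2nn : 0 ≤ E2 := expec_Sf2_nonneg hf.1 g n
      have hE2n : E2 ≤ n := expec_Sf2 hf g hm hb1 n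
      push_cast
      nlinarith [ih, hm4, mul_le_mul hE2n hm2 hm2' (Nat.cast_nonneg n),
        Finset.sum_nonneg (fun k (_ : k ∈ Finset.range (dbar+1)) =>
          mul_nonneg (hf.1 k) (by positivity : (0:ℝ) ≤ g k ^ 4))]

end Moments

section Deviation

variable {dbar : ℕ} {f : ℕ → ℝ}

lemma cdf_emp (n : ℕ) (d : Fin n → ℕ) (k : ℕ) :
    cdf (emp n d) k = (∑ s : Fin n, if d s ≤ k then (1:ℝ) else 0) / n := by
  rw [cdf]
  simp only [emp]
  rw [← Finset.sum_div]
  congr 1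
  rw [Finset.sum_comm]
  refine Finset.sum_congr rfl fun s _ => ?_
  rw [Finset.sum_ite_eq (Finset.range (k+1)) (d s) (fun _ => (1:ℝ))]
  exact if_congr (by rw [Finset.mem_range, Nat.lt_succ_iff]) rfl rfl

lemma deviation_bound (hf : IsDist dbar f) {δ : ℝ} (hδ : 0 < δ) {n : ℕ} (hn : 1 ≤ n)
    {d₀ : ℕ} (hd₀ : d₀ ≤ dbar) :
    expec dbar n f (fun d => if δ ≤ |cdf (emp n d) d₀ - cdf f d₀| then (1:ℝ) else 0)
      ≤ 3 / ((n:ℝ)^2 * δ^4) := by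
  set p := cdf f d₀ with hp
  set g : ℕ → ℝ := fun k => (if k ≤ d₀ then (1:ℝ) else 0) - p with hg
  have hnpos : (0:ℝ) < n := by exact_mod_cast hn
  have hm : ∑ k ∈ Finset.range (dbar+1), f k * g k = 0 := by
    have : ∀ k, f k * g k = (if k ≤ d₀ then f k else 0) - f k * p := by
      intro k; simp only [hg]; split <;> ring
    simp only [this]
    rw [Finset.sum_sub_distrib, sum_ite_le hf, ← Finset.sum_mul, hf.2.2, one_mul, hp]
    ring
  have hp0 : 0 ≤ p := cdf_nonneg hf.1 d₀
  have hp1 : p ≤ 1 := cdf_le_one hf d₀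
  have hb1 : ∀ k, |g k| ≤ 1 := by
    intro k
    rw [abs_le]; simp only [hg]
    split <;> constructor <;> linarith
  have key : ∀ d : Fin n → ℕ,
      (if δ ≤ |cdf (emp n d) d₀ - p| then (1:ℝ) else 0)
        ≤ Sf g n d ^ 4 * (1 / ((n:ℝ)^4 * δ^4)) := by
    intro d
    have hSd : cdf (emp n d) d₀ - p = Sf g n d / n := by
      rw [cdf_emp, Sf]
      simp only [hg]
      rw [Finset.sum_sub_distrib, Finset.sum_const, Finset.card_univ, Fintype.card_fin]
      field_simp
      rw [nsmul_eq_mul]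
    split
    · rename_i hev
      rw [hSd] at hev
      have h1 : (n:ℝ) * δ ≤ |Sf g n d| := by
        rw [abs_div, abs_of_pos hnpos] at hev
        rw [mul_comm]
        exact (le_div_iff₀ hnpos).mp hev
      have h2 : ((n:ℝ) * δ)^4 ≤ |Sf g n d|^4 :=
        pow_le_pow_left₀ (by positivity) h1 4
      have h3 : ((n:ℝ)^4 * δ^4) ≤ Sf g n d ^ 4 := by
        have h4 : Sf g n d ^ 4 = |Sf g n d| ^ 4 := by
          rw [← abs_pow, abs_of_nonneg (by positivity)]
        rw [h4]; nlinarith [h2]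
      rw [mul_one_div, le_div_iff₀ (by positivity : (0:ℝ) < (n:ℝ)^4 * δ^4), one_mul]
      exact h3
    · positivity
  calc expec dbar n f (fun d => if δ ≤ |cdf (emp n d) d₀ - p| then (1:ℝ) else 0)
      ≤ expec dbar n f (fun d => Sf g n d ^ 4 * (1 / ((n:ℝ)^4 * δ^4))) :=
        expec_mono hf.1 n (fun d _ => key d)
    _ = expec dbar n f (fun d => Sf g n d ^ 4) * (1 / ((n:ℝ)^4 * δ^4)) :=
        expec_mul_const n _ _
    _ ≤ 3 * (n:ℝ)^2 * (1 / ((n:ℝ)^4 * δ^4)) := by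
        refine mul_le_mul_of_nonneg_right ?_ (by positivity)
        exact expec_Sf4 hf g hm hb1 n
    _ = 3 / ((n:ℝ)^2 * δ^4) := by
        rw [mul_one_div, div_eq_div_iff (by positivity) (by positivity)]
        ring

end Deviation

section QFacts

variable {dbar : ℕ} {h b β : ℝ} {f : ℕ → ℝ}

lemma Q_nonneg (hf : ∀ d, 0 ≤ f d) (hh : 0 < h) (hb : 0 < b) (y : ℕ) :
    0 ≤ Q h b dbar f y := by
  refine Finset.sum_nonneg fun d _ => mul_nonneg (hf d) ?_
  have := le_max_right ((y:ℝ) - d) 0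
  have := le_max_right ((d:ℝ) - y) 0
  positivity

lemma Q_le (hf : IsDist dbar f) (hh : 0 < h) (hb : 0 < b) {y : ℕ} (hy : y ≤ dbar) :
    Q h b dbar f y ≤ (h + b) * dbar := by
  have : Q h b dbar f y ≤ ∑ d ∈ Finset.range (dbar+1), f d * ((h + b) * dbar) := by
    refine Finset.sum_le_sum fun d hd => mul_le_mul_of_nonneg_left ?_ (hf.1 d)
    simp at hd
    have h1 : max ((y:ℝ) - d) 0 ≤ dbar := by
      have : (y:ℝ) ≤ dbar := by exact_mod_cast hy
      have : (0:ℝ) ≤ dbar := by positivity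
      apply max_le <;> [skip; assumption]
      have : (0:ℝ) ≤ d := by positivity
      linarith
    have h2 : max ((d:ℝ) - y) 0 ≤ dbar := by
      have hd' : (d:ℝ) ≤ dbar := by exact_mod_cast hd
      have : (0:ℝ) ≤ dbar := by positivity
      apply max_le <;> [skip; assumption]
      have : (0:ℝ) ≤ y := by positivity
      linarith
    nlinarith [le_max_right ((y:ℝ) - d) 0, le_max_right ((d:ℝ) - y) 0]
  rw [← Finset.sum_mul, hf.2.2, one_mul] at this
  exact this

lemma Q_succ (hf : IsDist dbar f) (hh : 0 < h) (hb : 0 < b) (hβ : β = b / (h + b)) (y : ℕ) :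
    Q h b dbar f (y + 1) = Q h b dbar f y + (h + b) * (cdf f y - β) := by
  have hhb : (0:ℝ) < h + b := by linarith
  have hdiff : Q h b dbar f (y + 1) - Q h b dbar f y
      = ∑ d ∈ Finset.range (dbar+1), f d * (if d ≤ y then h else -b) := by
    rw [Q, Q, ← Finset.sum_sub_distrib]
    refine Finset.sum_congr rfl fun d _ => ?_
    rw [← mul_sub]
    congr 1
    rcases le_or_gt d y with hdy | hdy
    · have h1 : (d:ℝ) ≤ y := by exact_mod_cast hdy
      rw [if_pos hdy]
      rw [max_eq_left (by push_cast; linarith : (0:ℝ) ≤ ((y+1:ℕ):ℝ) - d),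
        max_eq_right (by push_cast; linarith : ((d:ℝ) - ((y+1:ℕ):ℝ)) ≤ 0),
        max_eq_left (by linarith : (0:ℝ) ≤ (y:ℝ) - d),
        max_eq_right (by linarith : ((d:ℝ) - (y:ℝ)) ≤ 0)]
      push_cast; ring
    · have h1 : (y:ℝ) + 1 ≤ d := by exact_mod_cast hdy
      rw [if_neg (by omega)]
      rw [max_eq_right (by push_cast; linarith : ((y+1:ℕ):ℝ) - d ≤ 0),
        max_eq_left (by push_cast; linarith : (0:ℝ) ≤ (d:ℝ) - ((y+1:ℕ):ℝ)),
        max_eq_right (by linarith : (y:ℝ) - (d:ℝ) ≤ 0),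
        max_eq_left (by linarith : (0:ℝ) ≤ (d:ℝ) - (y:ℝ))]
      push_cast; ring
  have h2 : ∀ d : ℕ, f d * (if d ≤ y then h else -b)
      = (h + b) * (if d ≤ y then f d else 0) - b * f d := by
    intro d; split <;> ring
  simp only [h2] at hdiff
  rw [Finset.sum_sub_distrib, ← Finset.mul_sum, sum_ite_le hf, ← Finset.mul_sum, hf.2.2] at hdiff
  have h3 : (h + b) * cdf f y - b * 1 = (h + b) * (cdf f y - β) := by
    rw [hβ]; field_simp
  linarith [hdiff, h3]

lemma Q_telescope (hf : IsDist dbar f) (hh : 0 < h) (hb : 0 < b) (hβ : β = b / (h + b))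
    {z y : ℕ} (hzy : z ≤ y) :
    Q h b dbar f y = Q h b dbar f z
      + (h + b) * ∑ d ∈ Finset.Ico z y, (cdf f d - β) := by
  induction y, hzy using Nat.le_induction with
  | base => simp
  | succ y hy ih =>
      rw [Q_succ hf hh hb hβ y, ih, Finset.sum_Ico_succ_top hy]
      ring

end QFacts

section YstarFacts

variable {dbar : ℕ} {h b β δ : ℝ} {f : ℕ → ℝ}

lemma ite01_nonneg (P : Prop) [Decidable P] : (0:ℝ) ≤ if P then 1 else 0 := by
  split <;> norm_num

lemma ystar_le (g : ℕ → ℝ) : ystar dbar β g ≤ dbar := by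
  by_cases hne : {d : ℕ | d ≤ dbar ∧ β ≤ cdf g d}.Nonempty
  · exact (Nat.sInf_mem hne).1
  · rw [ystar, Set.not_nonempty_iff_eq_empty.mp hne, Nat.sInf_empty]
    exact Nat.zero_le _

lemma ystar_mem (g : ℕ → ℝ) (hg1 : β ≤ cdf g dbar) :
    ystar dbar β g ≤ dbar ∧ β ≤ cdf g (ystar dbar β g) := by
  have h := Nat.sInf_mem (⟨dbar, ⟨le_rfl, hg1⟩⟩ :
    {d : ℕ | d ≤ dbar ∧ β ≤ cdf g d}.Nonempty)
  exact h

lemma ystar_min (g : ℕ → ℝ) {e : ℕ} (he : e < ystar dbar β g) (hed : e ≤ dbar) :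
    cdf g e < β := by
  by_contra hc
  push_neg at hc
  have hle : ystar dbar β g ≤ e :=
    Nat.sInf_le (show e ∈ {d : ℕ | d ≤ dbar ∧ β ≤ cdf g d} from ⟨hed, hc⟩)
  omega

lemma emp_nonneg (n : ℕ) (d : Fin n → ℕ) (k : ℕ) : 0 ≤ emp n d k := by
  rw [emp]
  apply div_nonneg _ (Nat.cast_nonneg n)
  exact Finset.sum_nonneg fun s _ => ite01_nonneg _

lemma cdf_emp_dbar {n : ℕ} (hn : 1 ≤ n) {d : Fin n → ℕ} (hd : ∀ s, d s ≤ dbar) :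
    cdf (emp n d) dbar = 1 := by
  rw [cdf_emp]
  have : ∀ s : Fin n, (if d s ≤ dbar then (1:ℝ) else 0) = 1 := fun s => if_pos (hd s)
  simp only [this, Finset.sum_const, Finset.card_univ, Fintype.card_fin, nsmul_eq_mul, mul_one]
  have hnpos : (0:ℝ) < n := by exact_mod_cast hn
  field_simp

lemma gamma_ge (hsep : δ ≤ sep dbar β f) {d : ℕ} (hd : d ≤ dbar) (hcdf : β < cdf f d) :
    β + δ ≤ cdf f d := by
  have h1 : gammaSep dbar β f ≤ cdf f d :=
    csInf_le ⟨β, fun x hx => by obtain ⟨e, he, rfl, hb⟩ := hx; exact le_of_lt hb⟩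
      ⟨d, hd, rfl, hcdf⟩
  have h2 : δ ≤ gammaSep dbar β f - β := le_trans hsep (min_le_right _ _)
  linarith

lemma alpha_le (hβpos : 0 ≤ β) (hsep : δ ≤ sep dbar β f) {d : ℕ} (hd : d ≤ dbar)
    (hcdf : cdf f d < β) : cdf f d ≤ β - δ := by
  have hbdd : BddAbove (insert (0:ℝ) {x : ℝ | ∃ e ≤ dbar, cdf f e = x ∧ x < β}) := by
    refine ⟨β, ?_⟩
    rintro x (rfl | ⟨e, he, rfl, hx⟩)
    · exact hβpos
    · exact le_of_lt hx
  have h1 : cdf f d ≤ alphaSep dbar β f :=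
    le_csSup hbdd (Set.mem_insert_iff.2 (Or.inr ⟨d, hd, rfl, hcdf⟩))
  have h2 : δ ≤ β - alphaSep dbar β f := le_trans hsep (min_le_left _ _)
  linarith

lemma Qhat_bound (hf : IsDist dbar f) (hh : 0 < h) (hb : 0 < b) (hβ : β = b / (h + b))
    (hδ : 0 < δ) (hsep : δ ≤ sep dbar β f) {n : ℕ} (hn : 1 ≤ n) (d : Fin n → ℕ)
    (hd : ∀ s, d s ≤ dbar) :
    Q h b dbar f (yhat dbar β n d) - Q h b dbar f (ystar dbar β f)
      ≤ (h + b) * ∑ d₀ ∈ Finset.range dbar,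
          (if δ ≤ |cdf (emp n d) d₀ - cdf f d₀| then (1:ℝ) else 0) := by
  have hhb : (0:ℝ) < h + b := by linarith
  have hβ0 : 0 < β := by rw [hβ]; positivity
  have hβ1 : β < 1 := by rw [hβ, div_lt_one hhb]; linarith
  set Y := ystar dbar β f with hY
  have hyhat : yhat dbar β n d = ystar dbar β (emp n d) := rfl
  rw [hyhat]
  set yh := ystar dbar β (emp n d) with hyh
  have hYmem := ystar_mem (β := β) f (by rw [cdf_eq_one hf le_rfl]; exact le_of_lt hβ1)
  have hyhmem := ystar_mem (β := β) (emp n d) (by rw [cdf_emp_dbar hn hd]; exact le_of_lt hβ1)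
  rcases le_or_gt Y yh with hc | hc
  · rw [Q_telescope hf hh hb hβ hc]
    have hsum : ∑ e ∈ Finset.Ico Y yh, (cdf f e - β)
        ≤ ∑ d₀ ∈ Finset.range dbar, (if δ ≤ |cdf (emp n d) d₀ - cdf f d₀| then (1:ℝ) else 0) := by
      refine le_trans (Finset.sum_le_sum ?_)
        (Finset.sum_le_sum_of_subset_of_nonneg ?_ (fun k _ _ => ite01_nonneg _))
      · intro e he
        rw [Finset.mem_Ico] at he
        have hedbar : e ≤ dbar := le_trans (le_of_lt he.2) hyhmem.1
        have h1 : β ≤ cdf f e := le_trans hYmem.2 (cdf_mono hf.1 he.1)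
        rcases eq_or_lt_of_le h1 with heq | hlt
        · rw [← heq]
          simpa using ite01_nonneg _
        · have h2 : β + δ ≤ cdf f e := gamma_ge hsep hedbar hlt
          have h3 : cdf (emp n d) e < β := ystar_min (emp n d) he.2 hedbar
          rw [if_pos (by rw [abs_sub_comm]; exact le_trans (by linarith) (le_abs_self _))]
          have := cdf_le_one hf e
          linarith
      · intro e he
        rw [Finset.mem_Ico] at he
        rw [Finset.mem_range]
        omega
    nlinarith [hsum]
  · rw [Q_telescope hf hh hb hβ (le_of_lt hc : yh ≤ Y)]
    set A := ∑ e ∈ Finset.Ico yh Y, (cdf f e - β) with hA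
    set B := ∑ d₀ ∈ Finset.range dbar,
        (if δ ≤ |cdf (emp n d) d₀ - cdf f d₀| then (1:ℝ) else 0) with hB
    have hAB : -B ≤ A := by
      have h0 : ∑ e ∈ Finset.Ico yh Y,
          -(if δ ≤ |cdf (emp n d) e - cdf f e| then (1:ℝ) else 0) ≤ A := by
        refine Finset.sum_le_sum ?_
        intro e he
        rw [Finset.mem_Ico] at he
        have hedbar : e ≤ dbar := le_trans (le_of_lt he.2) hYmem.1
        have h1 : cdf f e < β := ystar_min f he.2 hedbar
        have h2 : cdf f e ≤ β - δ := alpha_le (le_of_lt hβ0) hsep hedbar h1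
        have h3 : β ≤ cdf (emp n d) e :=
          le_trans hyhmem.2 (cdf_mono (emp_nonneg n d) he.1)
        rw [if_pos (le_trans (by linarith) (le_abs_self _))]
        have := cdf_nonneg hf.1 e
        linarith
      have h4 : ∑ e ∈ Finset.Ico yh Y,
          (if δ ≤ |cdf (emp n d) e - cdf f e| then (1:ℝ) else 0) ≤ B := by
        refine Finset.sum_le_sum_of_subset_of_nonneg ?_ (fun k _ _ => ite01_nonneg _)
        intro e he
        rw [Finset.mem_Ico] at he
        rw [Finset.mem_range]
        have := hYmem.1
        omega
      rw [Finset.sum_neg_distrib] at h0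
      linarith
    have hB0 : 0 ≤ B := Finset.sum_nonneg fun k _ => ite01_nonneg _
    nlinarith [hAB, hB0]

end YstarFacts

section MinFacts

variable {dbar : ℕ} {h b β δ : ℝ} {f : ℕ → ℝ}

lemma Q_min (hf : IsDist dbar f) (hh : 0 < h) (hb : 0 < b) (hβ : β = b / (h + b)) (y : ℕ) :
    Q h b dbar f (ystar dbar β f) ≤ Q h b dbar f y := by
  have hhb : (0:ℝ) < h + b := by linarith
  have hβ1 : β < 1 := by rw [hβ, div_lt_one hhb]; linarith
  set Y := ystar dbar β f with hY
  have hYmem := ystar_mem (β := β) f (by rw [cdf_eq_one hf le_rfl]; exact le_of_lt hβ1)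
  rcases le_or_gt Y y with hc | hc
  · rw [Q_telescope hf hh hb hβ hc]
    have : 0 ≤ ∑ e ∈ Finset.Ico Y y, (cdf f e - β) := by
      refine Finset.sum_nonneg fun e he => ?_
      rw [Finset.mem_Ico] at he
      have := le_trans hYmem.2 (cdf_mono hf.1 he.1)
      linarith
    nlinarith
  · rw [Q_telescope hf hh hb hβ (le_of_lt hc : y ≤ Y)]
    have : ∑ e ∈ Finset.Ico y Y, (cdf f e - β) ≤ 0 := by
      refine Finset.sum_nonpos fun e he => ?_
      rw [Finset.mem_Ico] at he
      have := ystar_min f he.2 (le_trans (le_of_lt he.2) hYmem.1)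
      linarith
    nlinarith

lemma Qstar_eq (hf : IsDist dbar f) (hh : 0 < h) (hb : 0 < b) (hβ : β = b / (h + b)) :
    Qstar h b dbar f = Q h b dbar f (ystar dbar β f) := by
  refine le_antisymm ?_ ?_
  · exact Finset.inf'_le _ (Finset.mem_range.2 (Nat.lt_succ_of_le (ystar_le f)))
  · exact Finset.le_inf' _ _ fun y _ => Q_min hf hh hb hβ y

/-- `y⁺ = min {d ≤ dbar | β < F_f(d)}`. -/
def yplus (dbar : ℕ) (β : ℝ) (f : ℕ → ℝ) : ℕ := sInf {d : ℕ | d ≤ dbar ∧ β < cdf f d}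

lemma yplus_mem (hf : IsDist dbar f) (hβ1 : β < 1) :
    yplus dbar β f ≤ dbar ∧ β < cdf f (yplus dbar β f) := by
  have h := Nat.sInf_mem (⟨dbar, ⟨le_rfl, by rw [cdf_eq_one hf le_rfl]; exact hβ1⟩⟩ :
    {d : ℕ | d ≤ dbar ∧ β < cdf f d}.Nonempty)
  exact h

lemma yplus_min {e : ℕ} (he : e < yplus dbar β f) (hed : e ≤ dbar) : cdf f e ≤ β := by
  by_contra hc
  push_neg at hc
  have hle : yplus dbar β f ≤ e :=
    Nat.sInf_le (show e ∈ {d : ℕ | d ≤ dbar ∧ β < cdf f d} from ⟨hed, hc⟩)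
  omega

lemma ystar_le_yplus (hf : IsDist dbar f) (hβ1 : β < 1) :
    ystar dbar β f ≤ yplus dbar β f := by
  have h := yplus_mem (β := β) hf hβ1
  exact Nat.sInf_le (show yplus dbar β f ∈ {d : ℕ | d ≤ dbar ∧ β ≤ cdf f d} from
    ⟨h.1, le_of_lt h.2⟩)

lemma pol_le_dbar (β' : ℝ) : ∀ n (d : Fin n → ℕ), pol dbar β' n d ≤ dbar := by
  intro n
  induction n with
  | zero => intro d; exact Nat.zero_le _
  | succ n ih =>
      intro d
      rw [pol]
      exact max_le (ystar_le _) (le_trans (Nat.sub_le _ _) (ih _))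

lemma pol_succ_ind (β' : ℝ) (m n : ℕ) (d : Fin (n+1) → ℕ) :
    (if m < pol dbar β' (n+1) d then (1:ℝ) else 0)
      ≤ (if m < yhat dbar β' (n+1) d then (1:ℝ) else 0)
        + (if m < pol dbar β' n (fun s => d s.castSucc) then (1:ℝ) else 0)
          * (if d (Fin.last n) ≠ dbar then (1:ℝ) else 0) := by
  by_cases h1 : m < pol dbar β' (n+1) d
  · rw [if_pos h1]
    rw [pol] at h1
    rcases lt_max_iff.mp h1 with h2 | h2
    · rw [if_pos h2]
      have := mul_nonneg (ite01_nonneg (m < pol dbar β' n (fun s => d s.castSucc)))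
        (ite01_nonneg (d (Fin.last n) ≠ dbar))
      linarith
    · have h3 : m < pol dbar β' n (fun s => d s.castSucc) :=
        lt_of_lt_of_le h2 (Nat.sub_le _ _)
      have h4 : d (Fin.last n) ≠ dbar := by
        intro hc
        rw [hc] at h2
        have := pol_le_dbar (dbar := dbar) β' n (fun s => d s.castSucc)
        omega
      rw [if_pos h3, if_pos h4, mul_one]
      have := ite01_nonneg (m < yhat dbar β' (n+1) d)
      linarith
  · rw [if_neg h1]
    have := ite01_nonneg (m < yhat dbar β' (n+1) d)
    have := mul_nonneg (ite01_nonneg (m < pol dbar β' n (fun s => d s.castSucc)))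
      (ite01_nonneg (d (Fin.last n) ≠ dbar))
    linarith

lemma sum_inv_sq (T : ℕ) :
    ∑ n ∈ Finset.range T, 1/((n:ℝ)+1)^2 ≤ 2 - 2/((T:ℝ)+1) := by
  induction T with
  | zero => simp
  | succ T ih =>
      rw [Finset.sum_range_succ]
      push_cast
      set x : ℝ := (T:ℝ) + 1 with hx
      have hx1 : (1:ℝ) ≤ x := by rw [hx]; push_cast; linarith [Nat.cast_nonneg (α := ℝ) T]
      have key : 1/x^2 + 2/(x+1) ≤ 2/x := by
        rw [div_add_div _ _ (by positivity) (by positivity),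
          div_le_div_iff₀ (by positivity) (by positivity)]
        nlinarith
      linarith

end MinFacts

section CostDecomp

variable {dbar : ℕ} {h b β δ : ℝ} {f : ℕ → ℝ}

lemma emp_zero (d : Fin 0 → ℕ) (k : ℕ) : emp 0 d k = 0 := by
  simp [emp]

lemma yhat_le_pol (hβ0 : 0 < β) : ∀ n (d : Fin n → ℕ), yhat dbar β n d ≤ pol dbar β n d := by
  intro n
  match n with
  | 0 =>
      intro d
      have hempty : {e : ℕ | e ≤ dbar ∧ β ≤ cdf (emp 0 d) e} = ∅ := by
        ext e
        simp only [Set.mem_setOf_eq, Set.mem_empty_iff_false, iff_false, not_and]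
        intro _
        have : cdf (emp 0 d) e = 0 := by
          rw [cdf]
          exact Finset.sum_eq_zero fun i _ => emp_zero d i
        rw [this]
        linarith
      show ystar dbar β (emp 0 d) ≤ 0
      rw [ystar, hempty, Nat.sInf_empty]
  | n + 1 =>
      intro d
      rw [pol]
      exact le_max_left _ _

lemma cost_decomp (hf : IsDist dbar f) (hh : 0 < h) (hb : 0 < b) (hβ : β = b / (h + b))
    (n : ℕ) (d : Fin n → ℕ) :
    Q h b dbar f (pol dbar β n d) - Q h b dbar f (ystar dbar β f)
      ≤ (Q h b dbar f (yhat dbar β n d) - Q h b dbar f (ystar dbar β f))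
        + (h + b) * dbar * (if yplus dbar β f < pol dbar β n d then (1:ℝ) else 0) := by
  have hhb : (0:ℝ) < h + b := by linarith
  have hβ0 : 0 < β := by rw [hβ]; positivity
  by_cases hc : yplus dbar β f < pol dbar β n d
  · rw [if_pos hc, mul_one]
    have h1 : Q h b dbar f (pol dbar β n d) ≤ (h+b) * dbar :=
      Q_le hf hh hb (pol_le_dbar β n d)
    have h2 : 0 ≤ Q h b dbar f (ystar dbar β f) := Q_nonneg hf.1 hh hb _
    have h3 : Q h b dbar f (ystar dbar β f) ≤ Q h b dbar f (yhat dbar β n d) :=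
      Q_min hf hh hb hβ _
    linarith
  · rw [if_neg hc, mul_zero, add_zero]
    push_neg at hc
    have h4 : yhat dbar β n d ≤ pol dbar β n d := yhat_le_pol hβ0 n d
    have h5 : Q h b dbar f (pol dbar β n d) ≤ Q h b dbar f (yhat dbar β n d) := by
      rw [Q_telescope hf hh hb hβ h4]
      have hsum : ∑ e ∈ Finset.Ico (yhat dbar β n d) (pol dbar β n d), (cdf f e - β) ≤ 0 := by
        refine Finset.sum_nonpos fun e he => ?_
        rw [Finset.mem_Ico] at he
        have hed : e ≤ dbar := le_trans (le_of_lt he.2) (pol_le_dbar β n d)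
        have := yplus_min (β := β) (f := f) (lt_of_lt_of_le he.2 hc) hed
        linarith
      nlinarith
    linarith

end CostDecomp

theorem stmt8 (dbar : ℕ) (hdbar : 1 ≤ dbar) (h b : ℝ) (hh : 0 < h) (hb : 0 < b)
    (β : ℝ) (hβ : β = b / (h + b))
    (ε δ : ℝ) (hε : 0 < ε) (hδ : 0 < δ) :
    ∃ A : ℝ, 0 < A ∧ ∀ T : ℕ, 1 ≤ T → ∀ f : ℕ → ℝ, IsDist dbar f →
      ε ≤ f dbar → δ ≤ sep dbar β f → regret h b dbar β f T ≤ A := by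
  have hhb : (0:ℝ) < h + b := by linarith
  have hβ0 : 0 < β := by rw [hβ]; positivity
  have hβ1 : β < 1 := by rw [hβ, div_lt_one hhb]; linarith
  have hdbar0 : (0:ℝ) < (dbar:ℝ) := by exact_mod_cast hdbar
  refine ⟨(h+b) * dbar * (1 + 6/δ^4 + 6/(ε*δ^4)) + 1, by positivity, ?_⟩
  intro T hT f hf hfε hsep
  set Y := ystar dbar β f with hY
  set yp := yplus dbar β f with hyp
  have hYmem := ystar_mem (β := β) f (by rw [cdf_eq_one hf le_rfl]; exact le_of_lt hβ1)
  have hypmem := yplus_mem (β := β) hf hβ1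
  have hε1 : ε ≤ 1 := by
    refine le_trans hfε ?_
    calc f dbar ≤ ∑ k ∈ Finset.range (dbar+1), f k :=
          Finset.single_le_sum (fun k _ => hf.1 k) (Finset.mem_range.2 (Nat.lt_succ_self dbar))
      _ = 1 := hf.2.2
  set C : ℝ := (h+b) * dbar with hC
  have hC0 : 0 ≤ C := by positivity
  set aseq : ℕ → ℝ := fun n =>
    expec dbar n f (fun d => if yp < pol dbar β n d then (1:ℝ) else 0) with ha
  set E1 : ℕ → ℝ := fun n =>
    expec dbar n f (fun d => Q h b dbar f (yhat dbar β n d) - Q h b dbar f Y) with hE1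
  set Qb : ℕ → ℝ := fun m => 3/((m:ℝ)^2 * δ^4) with hQb
  -- the regret as a sum of expectations of differences
  have hregret : regret h b dbar β f T
      = ∑ n ∈ Finset.range T,
          expec dbar n f (fun d => Q h b dbar f (pol dbar β n d) - Q h b dbar f Y) := by
    rw [regret, Qstar_eq hf hh hb hβ, ← hY]
    have h1 : ∀ n, expec dbar n f (fun d => Q h b dbar f (pol dbar β n d) - Q h b dbar f Y)
        = expec dbar n f (fun d => Q h b dbar f (pol dbar β n d)) - Q h b dbar f Y :=
      fun n => expec_sub_const hf n _ _
    simp only [h1]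
    rw [Finset.sum_sub_distrib, Finset.sum_const, Finset.card_range, nsmul_eq_mul]
  -- termwise bound
  have hterm : ∀ n,
      expec dbar n f (fun d => Q h b dbar f (pol dbar β n d) - Q h b dbar f Y)
        ≤ E1 n + C * aseq n := by
    intro n
    refine le_trans (expec_mono hf.1 n (fun d _ => cost_decomp hf hh hb hβ n d)) ?_
    rw [expec_add, expec_const_mul]
  -- basic facts on aseq
  have haseq0 : aseq 0 = 0 := by
    rw [ha]
    simp only
    rw [expec_zero]
    exact if_neg (Nat.not_lt_zero yp)
  have haseq_nn : ∀ n, 0 ≤ aseq n := fun n =>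
    expec_nonneg hf.1 n (fun d => ite01_nonneg _)
  -- bound on the yhat-exceedance probability
  have hq : ∀ n : ℕ, expec dbar (n+1) f
      (fun d => if yp < yhat dbar β (n+1) d then (1:ℝ) else 0) ≤ Qb (n+1) := by
    intro n
    refine le_trans (expec_mono hf.1 (n+1) ?_)
      (deviation_bound hf hδ (Nat.le_add_left 1 n) hypmem.1)
    intro d hd
    by_cases hev : yp < yhat dbar β (n+1) d
    · rw [if_pos hev]
      have h1 : cdf (emp (n+1) d) yp < β := ystar_min (emp (n+1) d) hev hypmem.1
      have h2 : β + δ ≤ cdf f yp := gamma_ge hsep hypmem.1 hypmem.2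
      rw [if_pos ?_]
      rw [abs_sub_comm]
      exact le_trans (by linarith) (le_abs_self _)
    · rw [if_neg hev]
      exact ite01_nonneg _
  -- recursion for aseq
  have harec : ∀ n : ℕ, aseq (n+1) ≤ Qb (n+1) + (1 - ε) * aseq n := by
    intro n
    have hstep1 : aseq (n+1) ≤ expec dbar (n+1) f
        (fun d => (if yp < yhat dbar β (n+1) d then (1:ℝ) else 0)
          + (if yp < pol dbar β n (fun s => d s.castSucc) then (1:ℝ) else 0)
            * (if d (Fin.last n) ≠ dbar then (1:ℝ) else 0)) := by
      rw [ha]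
      exact expec_mono hf.1 (n+1) (fun d _ => pol_succ_ind β yp n d)
    rw [expec_add] at hstep1
    have hstep2 : expec dbar (n+1) f
        (fun d => (if yp < pol dbar β n (fun s => d s.castSucc) then (1:ℝ) else 0)
          * (if d (Fin.last n) ≠ dbar then (1:ℝ) else 0))
        = ∑ k ∈ Finset.range (dbar+1), f k *
            expec dbar n f (fun e => (if yp < pol dbar β n e then (1:ℝ) else 0)
              * (if k ≠ dbar then (1:ℝ) else 0)) :=
      expec_snoc n (fun e k => (if yp < pol dbar β n e then (1:ℝ) else 0)
        * (if k ≠ dbar then (1:ℝ) else 0))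
    have hstep3 : ∀ k : ℕ, expec dbar n f
        (fun e => (if yp < pol dbar β n e then (1:ℝ) else 0)
          * (if k ≠ dbar then (1:ℝ) else 0))
        = aseq n * (if k ≠ dbar then (1:ℝ) else 0) :=
      fun k => expec_mul_const n _ _
    have hstep4 : ∑ k ∈ Finset.range (dbar+1),
        f k * (aseq n * (if k ≠ dbar then (1:ℝ) else 0)) = aseq n * (1 - f dbar) := by
      have hterm : ∀ k : ℕ, f k * (aseq n * (if k ≠ dbar then (1:ℝ) else 0))
          = aseq n * (f k - if k = dbar then f k else 0) := by
        intro k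
        by_cases hk : k = dbar <;> simp [hk] <;> ring
      simp only [hterm]
      rw [← Finset.mul_sum, Finset.sum_sub_distrib, hf.2.2,
        Finset.sum_ite_eq' (Finset.range (dbar+1)) dbar f,
        if_pos (Finset.mem_range.2 (Nat.lt_succ_self dbar))]
    rw [hstep2] at hstep1
    simp only [hstep3] at hstep1
    rw [hstep4] at hstep1
    have h6 : aseq n * (1 - f dbar) ≤ (1 - ε) * aseq n := by
      nlinarith [haseq_nn n, hfε]
    have := hq n
    linarith
  -- expected cost of yhat
  have hE1bound : ∀ n : ℕ, E1 (n+1) ≤ C * Qb (n+1) := by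
    intro n
    have hstep1 : E1 (n+1) ≤ expec dbar (n+1) f
        (fun d => (h+b) * ∑ d₀ ∈ Finset.range dbar,
          (if δ ≤ |cdf (emp (n+1) d) d₀ - cdf f d₀| then (1:ℝ) else 0)) := by
      rw [hE1]
      exact expec_mono hf.1 (n+1)
        (fun d hd => Qhat_bound hf hh hb hβ hδ hsep (Nat.le_add_left 1 n) d hd)
    rw [expec_const_mul, expec_sum] at hstep1
    have hstep2 : ∑ d₀ ∈ Finset.range dbar, expec dbar (n+1) f
        (fun d => if δ ≤ |cdf (emp (n+1) d) d₀ - cdf f d₀| then (1:ℝ) else 0)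
        ≤ ∑ d₀ ∈ Finset.range dbar, Qb (n+1) := by
      refine Finset.sum_le_sum fun d₀ hd₀ => ?_
      exact deviation_bound hf hδ (Nat.le_add_left 1 n)
        (le_of_lt (Finset.mem_range.1 hd₀))
    rw [Finset.sum_const, Finset.card_range, nsmul_eq_mul] at hstep2
    have : (h+b) * ((dbar:ℝ) * Qb (n+1)) = C * Qb (n+1) := by rw [hC]; ring
    nlinarith [hstep1, hstep2]
  have hE10 : E1 0 ≤ C := by
    rw [hE1]
    simp only
    rw [expec_zero]
    have key : ∀ y : ℕ, y ≤ dbar → Q h b dbar f y - Q h b dbar f Y ≤ C := by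
      intro y hy
      have h1 := Q_le hf hh hb hy
      have h2 := Q_nonneg (dbar := dbar) (f := f) hf.1 hh hb Y
      rw [hC]
      linarith
    exact key _ (ystar_le _)
  -- sum of Qb
  have hQbsum : ∀ M : ℕ, ∑ n ∈ Finset.range M, Qb (n+1) ≤ 6/δ^4 := by
    intro M
    have h1 : ∀ n : ℕ, Qb (n+1) = 3/δ^4 * (1/((n:ℝ)+1)^2) := by
      intro n
      rw [hQb]
      simp only
      push_cast
      rw [div_mul_div_comm]
      rw [mul_one, mul_comm (((n:ℝ)+1)^2) (δ^4)]
    simp only [h1]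
    rw [← Finset.mul_sum]
    have h2 := sum_inv_sq M
    have h3 : (0:ℝ) ≤ 2/((M:ℝ)+1) := by positivity
    have h4 : (0:ℝ) ≤ 3/δ^4 := by positivity
    calc 3/δ^4 * ∑ n ∈ Finset.range M, 1/((n:ℝ)+1)^2
        ≤ 3/δ^4 * 2 := by nlinarith
      _ = 6/δ^4 := by ring
  -- telescoping bound for aseq
  have haseqsum : ∀ M : ℕ, ε * ∑ n ∈ Finset.range M, aseq n
      ≤ (∑ n ∈ Finset.range M, Qb (n+1)) - aseq M := by
    intro M
    induction M with
    | zero => simp [haseq0]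
    | succ M ih =>
        rw [Finset.sum_range_succ, Finset.sum_range_succ]
        have := harec M
        have := haseq_nn M
        nlinarith
  have haseqsum' : ∑ n ∈ Finset.range T, aseq n ≤ 6/(ε*δ^4) := by
    have h1 := haseqsum T
    have h2 := hQbsum T
    have h3 := haseq_nn T
    rw [le_div_iff₀ (by positivity : (0:ℝ) < ε*δ^4)]
    have h5 : ε * ∑ n ∈ Finset.range T, aseq n ≤ 6/δ^4 := by linarith
    have h6 : (ε * ∑ n ∈ Finset.range T, aseq n) * δ^4 ≤ (6/δ^4) * δ^4 :=
      mul_le_mul_of_nonneg_right h5 (by positivity)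
    rw [div_mul_cancel₀ _ (by positivity : (δ:ℝ)^4 ≠ 0)] at h6
    calc (∑ n ∈ Finset.range T, aseq n) * (ε*δ^4)
        = (ε * ∑ n ∈ Finset.range T, aseq n) * δ^4 := by ring
      _ ≤ 6 := h6
  -- sum of E1
  obtain ⟨T₀, rfl⟩ : ∃ T₀, T = T₀ + 1 := ⟨T - 1, by omega⟩
  have hE1sum : ∑ n ∈ Finset.range (T₀+1), E1 n ≤ C * (6/δ^4) + C := by
    rw [Finset.sum_range_succ']
    have h1 : ∑ n ∈ Finset.range T₀, E1 (n+1)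
        ≤ ∑ n ∈ Finset.range T₀, C * Qb (n+1) :=
      Finset.sum_le_sum fun n _ => hE1bound n
    rw [← Finset.mul_sum] at h1
    have h2 := hQbsum T₀
    have h3 : C * ∑ n ∈ Finset.range T₀, Qb (n+1) ≤ C * (6/δ^4) :=
      mul_le_mul_of_nonneg_left h2 hC0
    linarith [hE10]
  -- put everything together
  rw [hregret]
  have hsumterm : ∑ n ∈ Finset.range (T₀+1),
      expec dbar n f (fun d => Q h b dbar f (pol dbar β n d) - Q h b dbar f Y)
      ≤ ∑ n ∈ Finset.range (T₀+1), (E1 n + C * aseq n) :=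
    Finset.sum_le_sum fun n _ => hterm n
  rw [Finset.sum_add_distrib, ← Finset.mul_sum] at hsumterm
  have hfinal : C * ∑ n ∈ Finset.range (T₀+1), aseq n ≤ C * (6/(ε*δ^4)) :=
    mul_le_mul_of_nonneg_left haseqsum' hC0
  have hCexp : (h+b) * dbar * (1 + 6/δ^4 + 6/(ε*δ^4))
      = C + C * (6/δ^4) + C * (6/(ε*δ^4)) := by rw [hC]; ring
  linarith [hsumterm, hE1sum, hfinal]
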